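/- In the classical model C_H = H_C + H_S with H_C = p_t²/(2m_t) + m_t ω_t² t²/2 and H_S = −p²/(2m), the relational observable F_{q,T}(τ) = q − (p/m)(τ − φ_C) satisfies, along the Hamiltonian flow α^s generated by C_H: α^s·F_{q,T}(τ) = q − (p/m)(τ − φ⁰_C + (2π/ω_t)·⌊(s + φ⁰_C)/(2π/ω_t)⌋). In particular α^s·F_{q,T}(τ) is constant on each interval s ∈ [z·(2π/ω_t) − φ⁰_C, (z+1)·(2π/ω_t) − φ⁰_C), z ∈ ℤ, and jumps by −(p/m)·(2π/ω_t) at the endpoints. -/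
import Mathlib


open Real

/-- The flow `α^s·F_{q,T}(τ)` of the relational observable `F_{q,T}(τ) = q − (p/m)(τ − φ_C)`
for the oscillator-clock/free-particle model: the system point `(q, p)` drifts as
`q(s) = q − (p/m)s`, `p(s) = p`, and the clock angle as
`φ_C(s) = s + φ⁰ − φ_max·⌊(s + φ⁰)/φ_max⌋` with `φ_max = 2π/ω_t`. -/
noncomputable def Fflow (q p m ωt φ0 τ : ℝ) (s : ℝ) : ℝ :=
  (q - p / m * s) -
    p / m * (τ - (s + φ0 - (2 * π / ωt) * (⌊(s + φ0) / (2 * π / ωt)⌋ : ℝ)))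

/-- Example 3 of the paper (transient Dirac observable): along the flow generated by `C_H`,
`α^s·F_{q,T}(τ) = q − (p/m)(τ − φ⁰ + φ_max·⌊(s+φ⁰)/φ_max⌋)`; it is constant on each clock
cycle `s ∈ [z·φ_max − φ⁰, (z+1)·φ_max − φ⁰)` and jumps by `−(p/m)·φ_max` at the endpoints. -/
theorem stmt_12 (q p m ωt φ0 τ : ℝ) (hm : m ≠ 0) (hω : 0 < ωt)
    (hφ0 : φ0 ∈ Set.Ico 0 (2 * π / ωt)) :
    (∀ s : ℝ, Fflow q p m ωt φ0 τ s =
      q - p / m * (τ - φ0 + (2 * π / ωt) * (⌊(s + φ0) / (2 * π / ωt)⌋ : ℝ))) ∧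
    (∀ z : ℤ, ∀ s ∈ Set.Ico ((z : ℝ) * (2 * π / ωt) - φ0) (((z : ℝ) + 1) * (2 * π / ωt) - φ0),
      Fflow q p m ωt φ0 τ s = q - p / m * (τ - φ0 + (z : ℝ) * (2 * π / ωt))) ∧
    (∀ z : ℤ,
      Fflow q p m ωt φ0 τ (((z : ℝ) + 1) * (2 * π / ωt) - φ0) -
        Fflow q p m ωt φ0 τ ((z : ℝ) * (2 * π / ωt) - φ0) = -(p / m) * (2 * π / ωt)) := by
  have hT : (0:ℝ) < 2 * π / ωt := by positivity
  have h1 : ∀ s : ℝ, Fflow q p m ωt φ0 τ s =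
      q - p / m * (τ - φ0 + (2 * π / ωt) * (⌊(s + φ0) / (2 * π / ωt)⌋ : ℝ)) := by
    intro s; unfold Fflow; ring
  have hfloor : ∀ z : ℤ, ⌊(((z : ℝ) * (2 * π / ωt) - φ0) + φ0) / (2 * π / ωt)⌋ = z := by
    intro z
    have : (((z : ℝ) * (2 * π / ωt) - φ0) + φ0) / (2 * π / ωt) = (z : ℝ) := by
      field_simp
      ring
    rw [this, Int.floor_intCast]
  refine ⟨h1, ?_, ?_⟩
  · intro z s hs
    rw [h1]
    have hfl : ⌊(s + φ0) / (2 * π / ωt)⌋ = z := by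
      apply Int.floor_eq_iff.2
      constructor
      · rw [le_div_iff₀ hT]
        linarith [hs.1]
      · rw [div_lt_iff₀ hT]
        push_cast
        linarith [hs.2]
    rw [hfl]; ring
  · intro z
    rw [h1, h1]
    have e1 : ((((z : ℝ) + 1) * (2 * π / ωt) - φ0) + φ0) / (2 * π / ωt) = ((z : ℝ) + 1) := by
      field_simp
      ring
    have e2 : (((z : ℝ) * (2 * π / ωt) - φ0) + φ0) / (2 * π / ωt) = (z : ℝ) := by
      field_simp
      ring
    rw [e1, e2]
    have f1 : ⌊((z : ℝ) + 1)⌋ = z + 1 := by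
      rw [show ((z:ℝ)+1) = ((z+1 : ℤ) : ℝ) by push_cast; ring, Int.floor_intCast]
    rw [f1, Int.floor_intCast]
    push_cast
    ring
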